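/- arXiv:1308.4614 — 4 statements merged into one kernel-verified Lean document; each statement's English description precedes it below -/
import Mathlib

section
/- Let 𝔞 be a nonnegative bounded measurable function on ℝ^d with first-order weak derivatives bounded by a constant K. Then for every u ∈ L_p(ℝ^d) with p ∈ [2,∞), λ ∈ ℝ^d and h ≠ 0, ∫_{ℝ^d} |u|^{p−2} u · δ_{−h,λ}(𝔞 δ_{h,λ}u) dx ≤ 0. -/
/-!
Discrete integration by parts moves `δ_{-h,λ}` onto the factor `|u|^{p-2} u`, turning the
integral into `-∫ 𝔞 · δ_{h,λ}(|u|^{p-2} u) · δ_{h,λ}u`. Since `t ↦ |t|^{p-2} t` is monotone,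
the two difference quotients have the same sign, so the integrand is nonnegative. Hölder's
inequality with the exponents `p` and `p / (p - 1)` makes every integral involved finite.
-/

open MeasureTheory
open scoped ENNReal

/-- Finite difference operator `δ_{h,λ}φ(x) = (1/h)(φ(x+hλ) - φ(x))`. -/
noncomputable def finiteDiff {d : ℕ} (h : ℝ) (lam : EuclideanSpace ℝ (Fin d))
    (φ : EuclideanSpace ℝ (Fin d) → ℝ) (x : EuclideanSpace ℝ (Fin d)) : ℝ :=
  (φ (x + h • lam) - φ x) / h

lemma abs_rpow_sub_two_mul_self_of_nonneg {p t : ℝ} (hp : 1 < p) (ht : 0 ≤ t) :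
    |t| ^ (p - 2) * t = t ^ (p - 1) := by
  rcases ht.eq_or_lt with rfl | ht
  · simp [Real.zero_rpow (by linarith : p - 1 ≠ 0)]
  · rw [abs_of_pos ht, ← Real.rpow_add_one ht.ne']
    ring_nf

lemma abs_abs_rpow_sub_two_mul_self {p : ℝ} (hp : 1 < p) (t : ℝ) :
    |(|t| ^ (p - 2) * t)| = |t| ^ (p - 1) := by
  rw [abs_mul, abs_of_nonneg (Real.rpow_nonneg (abs_nonneg t) _)]
  simpa only [abs_abs] using abs_rpow_sub_two_mul_self_of_nonneg hp (abs_nonneg t)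

lemma monotone_abs_rpow_sub_two_mul_self {p : ℝ} (hp : 1 < p) :
    Monotone fun t : ℝ => |t| ^ (p - 2) * t :=
  monotone_of_odd_of_monotoneOn_nonneg (fun t => by simp only [abs_neg, mul_neg]) <|
    (Real.monotoneOn_rpow_Ici_of_exponent_nonneg (by linarith)).congr fun _ ht =>
      (abs_rpow_sub_two_mul_self_of_nonneg hp ht).symm

lemma MeasureTheory.MemLp.abs_rpow_sub_two_mul_self {α : Type*} [MeasurableSpace α]
    {μ : Measure α} {p : ℝ} (hp : 1 < p) {u : α → ℝ} (hu : MemLp u (ENNReal.ofReal p) μ) :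
    MemLp (fun x => |u x| ^ (p - 2) * u x) (ENNReal.ofReal p.conjExponent) μ := by
  have hpow := hu.norm_rpow_div (ENNReal.ofReal (p - 1))
  rw [ENNReal.toReal_ofReal (by linarith), ← ENNReal.ofReal_div_of_pos (by linarith)] at hpow
  refine hpow.of_le
    ((monotone_abs_rpow_sub_two_mul_self hp).measurable.comp_aemeasurable
      hu.1.aemeasurable).aestronglyMeasurable
    (Filter.Eventually.of_forall fun x => ?_)
  rw [Real.norm_eq_abs, Real.norm_eq_abs, Real.norm_eq_abs, abs_abs_rpow_sub_two_mul_self hp,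
    abs_of_nonneg (Real.rpow_nonneg (abs_nonneg _) _)]

section FiniteDiff

variable {d : ℕ} {μ : Measure (EuclideanSpace ℝ (Fin d))} [μ.IsAddRightInvariant]

lemma MeasureTheory.MemLp.finiteDiff {q : ℝ≥0∞} {u : EuclideanSpace ℝ (Fin d) → ℝ}
    (hu : MemLp u q μ) (h : ℝ) (lam : EuclideanSpace ℝ (Fin d)) :
    MemLp (finiteDiff h lam u) q μ := by
  change MemLp (fun x => (u (x + h • lam) - u x) / h) q μ
  simp_rw [div_eq_mul_inv]
  exact ((hu.comp_measurePreserving (measurePreserving_add_right μ (h • lam))).sub hu).mul_const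
    h⁻¹

lemma integral_mul_finiteDiff_neg (g v : EuclideanSpace ℝ (Fin d) → ℝ) (h : ℝ)
    (lam : EuclideanSpace ℝ (Fin d)) (hgv : Integrable (fun x => g x * v x) μ)
    (hgv_shift : Integrable (fun x => g (x + h • lam) * v x) μ) :
    ∫ x, g x * finiteDiff (-h) lam v x ∂μ = -∫ x, finiteDiff h lam g x * v x ∂μ := by
  set c := h • lam
  have hshift : ∫ x, g x * v (x - c) ∂μ = ∫ x, g (x + c) * v x ∂μ := by
    simpa only [sub_add_cancel] using
      integral_sub_right_eq_self (μ := μ) (fun x => g (x + c) * v x) c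
  have hgv_shift' : Integrable (fun x => g x * v (x - c)) μ := by
    simpa only [sub_add_cancel] using hgv_shift.comp_sub_right c
  calc ∫ x, g x * finiteDiff (-h) lam v x ∂μ
      = ∫ x, (g x * v x - g x * v (x - c)) / h ∂μ := by
        congr 1 with x
        rw [finiteDiff, neg_smul, ← sub_eq_add_neg]
        ring
    _ = (∫ x, g x * v x ∂μ - ∫ x, g (x + c) * v x ∂μ) / h := by
        rw [integral_div, integral_sub hgv hgv_shift', hshift]
    _ = -∫ x, finiteDiff h lam g x * v x ∂μ := by
        rw [← integral_sub hgv hgv_shift, ← integral_div, ← integral_neg]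
        congr 1 with x
        rw [finiteDiff]
        ring

end FiniteDiff

lemma finiteDiff_comp_mul_finiteDiff_nonneg {d : ℕ} {φ : ℝ → ℝ} (hφ : Monotone φ)
    (u : EuclideanSpace ℝ (Fin d) → ℝ) (h : ℝ) (lam x : EuclideanSpace ℝ (Fin d)) :
    0 ≤ finiteDiff h lam (φ ∘ u) x * finiteDiff h lam u x := by
  have hmono := (monovary_id_iff.2 hφ).sub_mul_sub_nonneg (u x) (u (x + h • lam))
  rw [finiteDiff, finiteDiff, div_mul_div_comm]
  exact div_nonneg hmono (mul_self_nonneg h)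

theorem integral_diffusion_nonpos_general {d : ℕ} (p : ℝ) (hp : 2 ≤ p) (K : ℝ)
    (𝔞 : EuclideanSpace ℝ (Fin d) → ℝ) (ha_nonneg : ∀ x, 0 ≤ 𝔞 x)
    (ha_bdd : ∀ x, 𝔞 x ≤ K) (ha_meas : Measurable 𝔞)
    (u : EuclideanSpace ℝ (Fin d) → ℝ)
    (hu : MemLp u (ENNReal.ofReal p) (volume : Measure (EuclideanSpace ℝ (Fin d))))
    (h : ℝ) (lam : EuclideanSpace ℝ (Fin d)) :
    (∫ x, |u x| ^ (p - 2) * u x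
        * finiteDiff (-h) lam (fun y => 𝔞 y * finiteDiff h lam u y) x) ≤ 0 := by
  have hp1 : 1 < p := by linarith
  have := (Real.HolderConjugate.conjExponent hp1).symm.ennrealOfReal
  set g := fun x => |u x| ^ (p - 2) * u x
  set v := fun y => 𝔞 y * finiteDiff h lam u y
  have hg : MemLp g (ENNReal.ofReal p.conjExponent) volume := hu.abs_rpow_sub_two_mul_self hp1
  have ha : MemLp 𝔞 ∞ volume := memLp_top_of_bound ha_meas.aestronglyMeasurable K
    (Filter.Eventually.of_forall fun x => by
      rw [Real.norm_eq_abs, abs_of_nonneg (ha_nonneg x)]; exact ha_bdd x)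
  have hv : MemLp v (ENNReal.ofReal p) volume := (hu.finiteDiff h lam).mul' ha
  have hg_shift := hg.comp_measurePreserving (measurePreserving_add_right volume (h • lam))
  refine (integral_mul_finiteDiff_neg g v h lam (hg.integrable_mul hv)
    (hg_shift.integrable_mul hv)).trans_le (neg_nonpos.2 (integral_nonneg fun x => ?_))
  rw [mul_left_comm]
  exact mul_nonneg (ha_nonneg x) <|
    finiteDiff_comp_mul_finiteDiff_nonneg (monotone_abs_rpow_sub_two_mul_self hp1) u h lam x

/-- If `𝔞 ≥ 0` is bounded measurable with first-order (weak) derivatives bounded by `K`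
(encoded as `𝔞` being `K`-Lipschitz), then for `u ∈ L_p`, `p ∈ [2,∞)`, `λ ∈ ℝ^d`, `h ≠ 0`:
`∫ |u|^{p−2} u · δ_{−h,λ}(𝔞 δ_{h,λ}u) dx ≤ 0`. -/
theorem integral_diffusion_nonpos {d : ℕ} (p : ℝ) (hp : 2 ≤ p) (K : ℝ) (hK : 0 ≤ K)
    (𝔞 : EuclideanSpace ℝ (Fin d) → ℝ) (ha_nonneg : ∀ x, 0 ≤ 𝔞 x)
    (ha_bdd : ∀ x, 𝔞 x ≤ K) (ha_meas : Measurable 𝔞)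
    (ha_lip : LipschitzWith (Real.toNNReal K) 𝔞)
    (u : EuclideanSpace ℝ (Fin d) → ℝ) (hu_meas : Measurable u)
    (hu : MemLp u (ENNReal.ofReal p) (volume : Measure (EuclideanSpace ℝ (Fin d))))
    (h : ℝ) (hh : h ≠ 0) (lam : EuclideanSpace ℝ (Fin d)) :
    (∫ x, |u x| ^ (p - 2) * u x
        * finiteDiff (-h) lam (fun y => 𝔞 y * finiteDiff h lam u y) x) ≤ 0 :=
  integral_diffusion_nonpos_general p hp K 𝔞 ha_nonneg ha_bdd ha_meas u hu h lam
end

section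
/- Let p = 2^k (k ≥ 1 integer), and let 𝔭 be a nonnegative measurable function on ℝ^d with weak first derivatives bounded by K. Then for every u ∈ L_p(ℝ^d), λ ∈ ℝ^d and h > 0, ∫_{ℝ^d} u^{p−1} 𝔭 δ_{h,λ}u dx ≤ (K|λ|/p) |u|_{L_p}^p. -/
open MeasureTheory
open scoped ENNReal

/-!
Since `p` is even, `t ↦ t ^ p` is convex, so its tangent line at `u x` lies below it; this gives
the pointwise bound `u ^ (p - 1) * 𝔭 * δ_{h,λ} u ≤ 𝔭 * δ_{h,λ} (u ^ p) / p`. Shifting the variable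
moves the difference quotient onto the coefficient, `∫ 𝔭 * δ_{h,λ} v = ∫ (δ_{h,-λ} 𝔭) * v`, and
`|δ_{h,-λ} 𝔭| ≤ K * ‖λ‖` because `𝔭` is `K`-Lipschitz. These steps need `𝔭` bounded, so they are
applied to the truncations `min 𝔭 n`, which are still `K`-Lipschitz, and dominated convergence
passes to the limit `n → ∞`.
-/

open Filter Topology NNReal

theorem ConvexOn.mul_sub_le_sub_of_hasDerivAt {S : Set ℝ} {f : ℝ → ℝ} {f' x y : ℝ}
    (hfc : ConvexOn ℝ S f) (hx : x ∈ S) (hy : y ∈ S) (hf : HasDerivAt f f' x) :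
    f' * (y - x) ≤ f y - f x := by
  rcases lt_trichotomy x y with hxy | rfl | hyx
  · have := hfc.le_slope_of_hasDerivAt hx hy hxy hf
    rwa [slope_def_field, le_div_iff₀ (sub_pos.2 hxy)] at this
  · simp
  · have := hfc.slope_le_of_hasDerivAt hy hx hyx hf
    rw [slope_def_field, div_le_iff₀ (sub_pos.2 hyx)] at this
    linarith

theorem Even.mul_pow_sub_one_mul_sub_le {n : ℕ} (hn : Even n) (a b : ℝ) :
    n * a ^ (n - 1) * (b - a) ≤ b ^ n - a ^ n :=
  hn.convexOn_pow.mul_sub_le_sub_of_hasDerivAt (Set.mem_univ a) (Set.mem_univ b)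
    (hasDerivAt_pow n a)

section FiniteDiff

variable {d : ℕ} {h : ℝ} {lam : EuclideanSpace ℝ (Fin d)}

theorem pow_sub_one_mul_finiteDiff_le {p : ℕ} (hp : Even p) (hp0 : p ≠ 0) (hh : 0 < h)
    {c : ℝ} (hc : 0 ≤ c) (u : EuclideanSpace ℝ (Fin d) → ℝ) (x : EuclideanSpace ℝ (Fin d)) :
    u x ^ (p - 1) * c * finiteDiff h lam u x ≤ c * finiteDiff h lam (fun y => u y ^ p) x / p := by
  have hp' : (0 : ℝ) < p := by positivity
  have htangent := hp.mul_pow_sub_one_mul_sub_le (u x) (u (x + h • lam))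
  rw [le_div_iff₀ hp']
  simp only [finiteDiff]
  calc u x ^ (p - 1) * c * ((u (x + h • lam) - u x) / h) * p
      = c / h * (p * u x ^ (p - 1) * (u (x + h • lam) - u x)) := by ring
    _ ≤ c / h * (u (x + h • lam) ^ p - u x ^ p) := by gcongr
    _ = c * ((u (x + h • lam) ^ p - u x ^ p) / h) := by ring

theorem LipschitzWith.abs_finiteDiff_le {K : ℝ≥0} {f : EuclideanSpace ℝ (Fin d) → ℝ}
    (hf : LipschitzWith K f) (h : ℝ) (lam x : EuclideanSpace ℝ (Fin d)) :
    |finiteDiff h lam f x| ≤ K * ‖lam‖ := by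
  rcases eq_or_ne h 0 with rfl | hh
  · simp only [finiteDiff, div_zero, abs_zero]; positivity
  have hdist := hf.dist_le_mul (x + h • lam) x
  rw [Real.dist_eq, dist_eq_norm, add_sub_cancel_left, norm_smul, Real.norm_eq_abs] at hdist
  rw [finiteDiff, abs_div, div_le_iff₀ (abs_pos.2 hh)]
  linarith

theorem Continuous.finiteDiff {f : EuclideanSpace ℝ (Fin d) → ℝ} (hf : Continuous f) :
    Continuous (finiteDiff h lam f) := by
  unfold _root_.finiteDiff; fun_prop

theorem MeasureTheory.Integrable.finiteDiff {v : EuclideanSpace ℝ (Fin d) → ℝ} (hv : Integrable v) :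
    Integrable (finiteDiff h lam v) :=
  ((hv.comp_add_right (h • lam)).sub hv).div_const h

theorem MeasureTheory.AEStronglyMeasurable.finiteDiff {v : EuclideanSpace ℝ (Fin d) → ℝ}
    (hv : AEStronglyMeasurable v) : AEStronglyMeasurable (finiteDiff h lam v) :=
  ((hv.comp_measurePreserving (measurePreserving_add_right volume (h • lam))).sub
    hv).aemeasurable.div_const h |>.aestronglyMeasurable

theorem integral_mul_finiteDiff {q v : EuclideanSpace ℝ (Fin d) → ℝ} {C : ℝ}
    (hq : AEStronglyMeasurable q) (hqC : ∀ x, |q x| ≤ C) (hv : Integrable v) :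
    ∫ x, q x * finiteDiff h lam v x = ∫ x, finiteDiff h (-lam) q x * v x := by
  have hqC_ae : ∀ᵐ x, ‖q x‖ ≤ C := ae_of_all _ hqC
  have hq' : AEStronglyMeasurable fun x => q (x + h • -lam) :=
    hq.comp_measurePreserving (measurePreserving_add_right volume _)
  have hq'C_ae : ∀ᵐ x, ‖q (x + h • -lam)‖ ≤ C := ae_of_all _ fun x => hqC _
  have hshift : ∫ x, q x * v (x + h • lam) = ∫ x, q (x + h • -lam) * v x := by
    rw [← integral_add_right_eq_self (fun x => q (x + h • -lam) * v x) (h • lam)]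
    simp
  calc ∫ x, q x * finiteDiff h lam v x
      = ∫ x, (q x * v (x + h • lam) - q x * v x) / h := by
        simp only [finiteDiff, mul_div_assoc', mul_sub]
    _ = ((∫ x, q x * v (x + h • lam)) - ∫ x, q x * v x) / h := by
        rw [integral_div,
          integral_sub ((hv.comp_add_right _).bdd_mul hq hqC_ae) (hv.bdd_mul hq hqC_ae)]
    _ = ((∫ x, q (x + h • -lam) * v x) - ∫ x, q x * v x) / h := by rw [hshift]
    _ = ∫ x, finiteDiff h (-lam) q x * v x := by
        rw [← integral_sub (hv.bdd_mul hq' hq'C_ae) (hv.bdd_mul hq hqC_ae), ← integral_div]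
        simp only [finiteDiff, sub_mul, div_mul_eq_mul_div]

end FiniteDiff

section Truncation

variable {α : Type*} [MeasurableSpace α] {μ : Measure α} {f q : α → ℝ}

theorem abs_mul_min_le_abs_mul {a b c : ℝ} (hb : 0 ≤ b) (hc : 0 ≤ c) : |a * min b c| ≤ |a * b| := by
  rw [abs_mul, abs_mul, abs_of_nonneg (le_min hb hc), abs_of_nonneg hb]
  exact mul_le_mul_of_nonneg_left (min_le_left b c) (abs_nonneg a)

theorem MeasureTheory.Integrable.mul_min_natCast (hf : AEStronglyMeasurable f μ)
    (hq : AEStronglyMeasurable q μ) (hq0 : ∀ x, 0 ≤ q x) (hfq : Integrable (fun x => f x * q x) μ)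
    (n : ℕ) : Integrable (fun x => f x * min (q x) n) μ :=
  hfq.mono (hf.mul (hq.inf aestronglyMeasurable_const)) <| ae_of_all _ fun x => by
    simpa only [Real.norm_eq_abs] using abs_mul_min_le_abs_mul (hq0 x) n.cast_nonneg

theorem tendsto_integral_mul_min_natCast (hf : AEStronglyMeasurable f μ)
    (hq : AEStronglyMeasurable q μ) (hq0 : ∀ x, 0 ≤ q x) (hfq : Integrable (fun x => f x * q x) μ) :
    Tendsto (fun n : ℕ => ∫ x, f x * min (q x) n ∂μ) atTop (𝓝 (∫ x, f x * q x ∂μ)) := by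
  refine tendsto_integral_of_dominated_convergence (fun x => |f x * q x|)
    (fun n => (hf.mul (hq.inf aestronglyMeasurable_const))) hfq.abs
    (fun n => ae_of_all _ fun x => ?_) (ae_of_all _ fun x => ?_)
  · simpa only [Real.norm_eq_abs] using abs_mul_min_le_abs_mul (hq0 x) n.cast_nonneg
  · refine tendsto_atTop_of_eventually_const (i₀ := ⌈q x⌉₊) fun n hn => ?_
    rw [min_eq_left ((Nat.le_ceil _).trans (Nat.cast_le.mpr hn))]

end Truncation

theorem integral_pow_sub_one_mul_finiteDiff_mul_le {d : ℕ} {h : ℝ} {lam : EuclideanSpace ℝ (Fin d)}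
    {p : ℕ} (hp : Even p) (hp0 : p ≠ 0) (hh : 0 < h) {K : ℝ≥0}
    {q : EuclideanSpace ℝ (Fin d) → ℝ} (hq0 : ∀ x, 0 ≤ q x) (hqK : LipschitzWith K q) {C : ℝ}
    (hqC : ∀ x, q x ≤ C) {u : EuclideanSpace ℝ (Fin d) → ℝ} (hu : Integrable fun x => u x ^ p)
    (hfi : Integrable fun x => u x ^ (p - 1) * finiteDiff h lam u x * q x) :
    ∫ x, u x ^ (p - 1) * finiteDiff h lam u x * q x ≤ K * ‖lam‖ / p * ∫ x, u x ^ p := by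
  have hq := hqK.continuous
  have hq_abs : ∀ x, |q x| ≤ C := fun x => (abs_of_nonneg (hq0 x)).trans_le (hqC x)
  have hδq : ∀ x, |finiteDiff h (-lam) q x| ≤ K * ‖lam‖ := fun x => by
    simpa only [norm_neg] using hqK.abs_finiteDiff_le h (-lam) x
  calc ∫ x, u x ^ (p - 1) * finiteDiff h lam u x * q x
      ≤ ∫ x, q x * finiteDiff h lam (fun y => u y ^ p) x / p := by
        refine integral_mono hfi ((hu.finiteDiff.bdd_mul hq.aestronglyMeasurable
          (ae_of_all _ fun x => (Real.norm_eq_abs _).trans_le (hq_abs x))).div_const _) fun x => ?_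
        simpa only [mul_right_comm] using pow_sub_one_mul_finiteDiff_le hp hp0 hh (hq0 x) u x
    _ = (∫ x, finiteDiff h (-lam) q x * u x ^ p) / p := by
        rw [integral_div, integral_mul_finiteDiff hq.aestronglyMeasurable hq_abs hu]
    _ ≤ (∫ x, K * ‖lam‖ * u x ^ p) / p := by
        refine div_le_div_of_nonneg_right (integral_mono ?_ (hu.const_mul _) fun x => ?_)
          p.cast_nonneg
        · exact hu.bdd_mul hq.finiteDiff.aestronglyMeasurable
            (ae_of_all _ fun x => (Real.norm_eq_abs _).trans_le (hδq x))
        · exact mul_le_mul_of_nonneg_right ((le_abs_self _).trans (hδq x)) (hp.pow_nonneg _)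
    _ = K * ‖lam‖ / p * ∫ x, u x ^ p := by
        rw [integral_const_mul]; ring

theorem integral_convection_bound_general {d : ℕ} (k : ℕ) (hk : 1 ≤ k) (p : ℕ) (hp : p = 2 ^ k)
    (K : ℝ) (hK : 0 ≤ K)
    (𝔭 : EuclideanSpace ℝ (Fin d) → ℝ) (h𝔭 : ∀ x, 0 ≤ 𝔭 x)
    (h𝔭lip : LipschitzWith (Real.toNNReal K) 𝔭)
    (u : EuclideanSpace ℝ (Fin d) → ℝ)
    (hu : MemLp u (p : ℝ≥0∞) (volume : Measure (EuclideanSpace ℝ (Fin d))))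
    (h : ℝ) (hh : 0 < h) (lam : EuclideanSpace ℝ (Fin d)) :
    (∫ x, u x ^ (p - 1) * 𝔭 x * finiteDiff h lam u x)
      ≤ (K * ‖lam‖ / p) * ∫ x, |u x| ^ p := by
  obtain ⟨hp_even, hp0⟩ : Even p ∧ p ≠ 0 := by
    subst hp; exact ⟨(Nat.even_pow' (by omega)).2 even_two, by positivity⟩
  have hup : Integrable fun x => u x ^ p := by
    simpa only [Real.norm_eq_abs, hp_even.pow_abs] using hu.integrable_norm_pow hp0
  simp_rw [hp_even.pow_abs, mul_right_comm (u _ ^ (p - 1)) (𝔭 _)]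
  by_cases hfi : Integrable fun x => u x ^ (p - 1) * finiteDiff h lam u x * 𝔭 x
  · have hf : AEStronglyMeasurable fun x => u x ^ (p - 1) * finiteDiff h lam u x :=
      (hu.1.pow _).mul hu.1.finiteDiff
    refine le_of_tendsto' (tendsto_integral_mul_min_natCast hf
      h𝔭lip.continuous.aestronglyMeasurable h𝔭 hfi) fun n => ?_
    simpa only [Real.coe_toNNReal K hK] using
      integral_pow_sub_one_mul_finiteDiff_mul_le hp_even hp0 hh
        (fun x => le_min (h𝔭 x) n.cast_nonneg) (h𝔭lip.min_const n)
        (fun x => min_le_right _ _) hup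
        (hfi.mul_min_natCast hf h𝔭lip.continuous.aestronglyMeasurable h𝔭 n)
  · rw [integral_undef hfi]
    exact mul_nonneg (by positivity) (integral_nonneg fun x => hp_even.pow_nonneg _)

/-- For `p = 2^k` (`k ≥ 1`), `𝔭 ≥ 0` measurable with (weak) first derivatives bounded by
`K` (encoded as `K`-Lipschitz), `u ∈ L_p`, `λ ∈ ℝ^d` and `h > 0`:
`∫ u^{p−1} 𝔭 δ_{h,λ}u dx ≤ (K|λ|/p) |u|_{L_p}^p`. -/
theorem integral_convection_bound {d : ℕ} (k : ℕ) (hk : 1 ≤ k) (p : ℕ) (hp : p = 2 ^ k)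
    (K : ℝ) (hK : 0 ≤ K)
    (𝔭 : EuclideanSpace ℝ (Fin d) → ℝ) (h𝔭 : ∀ x, 0 ≤ 𝔭 x) (h𝔭m : Measurable 𝔭)
    (h𝔭lip : LipschitzWith (Real.toNNReal K) 𝔭)
    (u : EuclideanSpace ℝ (Fin d) → ℝ) (hum : Measurable u)
    (hu : MemLp u (p : ℝ≥0∞) (volume : Measure (EuclideanSpace ℝ (Fin d))))
    (h : ℝ) (hh : 0 < h) (lam : EuclideanSpace ℝ (Fin d)) :
    (∫ x, u x ^ (p - 1) * 𝔭 x * finiteDiff h lam u x)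
      ≤ (K * ‖lam‖ / p) * ∫ x, |u x| ^ p :=
  integral_convection_bound_general k hk p hp K hK 𝔭 h𝔭 h𝔭lip u hu h hh lam
end

section
/- Let Λ ⊂ ℝ^d be a finite set such that every linearly dependent subset of Λ is linearly dependent over the rationals, and let 𝔾_h = {h(λ₁+⋯+λ_n) : λᵢ ∈ Λ, n ≥ 1} for h > 0. Then 𝔾_h ∩ B is a finite set for every bounded set B ⊂ ℝ^d. -/
/-!
Choose a maximal ℚ-linearly independent subset `s ⊆ Λ`: every element of `Λ` lies in its
ℚ-span, and by hypothesis `s` is ℝ-linearly independent. Clearing denominators gives `N > 0`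
with `N • Λ ⊆ span ℤ s`, so `(N / h) • 𝔾_h` lies in the ℤ-span of a basis of `ℝ^d` extending
`s`, a lattice, which meets every bounded set in a finite set.
-/

/-- The grid `𝔾_h = {h(λ₁+⋯+λ_n) : λᵢ ∈ Λ, n ≥ 1}` generated by a stencil `Λ`. -/
def gridSet {d : ℕ} (Λ : Finset (EuclideanSpace ℝ (Fin d))) (h : ℝ) :
    Set (EuclideanSpace ℝ (Fin d)) :=
  {x | ∃ l : List (EuclideanSpace ℝ (Fin d)),
    l ≠ [] ∧ (∀ y ∈ l, y ∈ Λ) ∧ x = h • l.sum}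

open Submodule Set Bornology Pointwise

section CommonDenominator

variable {E : Type*} [AddCommGroup E] [Module ℚ E] {s : Set E}

theorem exists_pos_nsmul_mem_span_int {x : E} (hx : x ∈ span ℚ s) :
    ∃ n : ℕ, 0 < n ∧ n • x ∈ span ℤ s := by
  induction hx using span_induction with
  | mem x hx => exact ⟨1, one_pos, by simpa using subset_span hx⟩
  | zero => exact ⟨1, one_pos, by simp⟩
  | add x y _ _ hx hy =>
    obtain ⟨m, hm, hmx⟩ := hx
    obtain ⟨n, hn, hny⟩ := hy
    refine ⟨n * m, Nat.mul_pos hn hm, ?_⟩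
    rw [smul_add, mul_nsmul', mul_comm, mul_nsmul']
    exact add_mem (nsmul_mem hmx n) (nsmul_mem hny m)
  | smul q x _ hx =>
    obtain ⟨n, hn, hnx⟩ := hx
    refine ⟨n * q.den, Nat.mul_pos hn q.pos, ?_⟩
    have hclear : (n * q.den) • q • x = q.num • n • x := by
      rw [← Nat.cast_smul_eq_nsmul ℚ, ← Nat.cast_smul_eq_nsmul ℚ, ← Int.cast_smul_eq_zsmul ℚ,
        smul_smul, smul_smul, Nat.cast_mul, mul_assoc, Rat.den_mul_eq_num, mul_comm]
    rw [hclear]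
    exact zsmul_mem hnx _

theorem exists_pos_nsmul_mem_span_int_of_finite {t : Set E} (ht : t.Finite)
    (hts : t ⊆ span ℚ s) : ∃ n : ℕ, 0 < n ∧ ∀ x ∈ span ℤ t, n • x ∈ span ℤ s := by
  choose! n hn_pos hn using fun x (hx : x ∈ t) ↦ exists_pos_nsmul_mem_span_int (hts hx)
  refine ⟨∏ x ∈ ht.toFinset, n x, Finset.prod_pos fun x hx ↦ hn_pos x (ht.mem_toFinset.mp hx), ?_⟩
  suffices t ⊆ (span ℤ s).comap ((∏ x ∈ ht.toFinset, n x) • LinearMap.id) from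
    fun x hx ↦ span_le.mpr this hx
  intro x hx
  obtain ⟨k, hk⟩ := Finset.dvd_prod_of_mem n (ht.mem_toFinset.mpr hx)
  simpa [hk, mul_nsmul] using nsmul_mem (hn x hx) k

end CommonDenominator

section Discreteness

variable {E : Type*} [NormedAddCommGroup E] [NormedSpace ℝ E] [FiniteDimensional ℝ E]
  {s : Set E} {B : Set E}

theorem LinearIndepOn.finite_inter_span_int (hs : LinearIndepOn ℝ id s) (hB : IsBounded B) :
    (B ∩ span ℤ s).Finite := by
  refine (ZSpan.setFinite_inter (Module.Basis.extend hs) hB).subset ?_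
  rw [Module.Basis.range_extend]
  exact inter_subset_inter_right _ (span_mono (hs.subset_extend _))

-- No compatibility with the `ℝ`-structure is assumed: a `ℚ`-module structure is unique.
theorem finite_inter_span_int_of_subset_span_rat [Module ℚ E] (hs : LinearIndepOn ℝ id s)
    {t : Set E} (ht : t.Finite) (hts : t ⊆ span ℚ s) (hB : IsBounded B) :
    (B ∩ span ℤ t).Finite := by
  obtain ⟨n, hn, hnt⟩ := exists_pos_nsmul_mem_span_int_of_finite ht hts
  have hmaps : MapsTo ((n : ℝ) • ·) (B ∩ span ℤ t) ((n : ℝ) • B ∩ span ℤ s) := by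
    rintro x ⟨hxB, hxt⟩
    exact ⟨smul_mem_smul_set hxB, by simpa [Nat.cast_smul_eq_nsmul] using hnt x hxt⟩
  have hinj : Function.Injective ((n : ℝ) • · : E → E) :=
    smul_right_injective E (Nat.cast_ne_zero.mpr hn.ne')
  exact ((hs.finite_inter_span_int (hB.smul₀ _)).preimage hinj.injOn).subset
    fun x hx ↦ hmaps hx

end Discreteness

theorem gridSet_subset_smul_span_int {d : ℕ} (Λ : Finset (EuclideanSpace ℝ (Fin d))) (h : ℝ) :
    gridSet Λ h ⊆ h • (span ℤ (Λ : Set (EuclideanSpace ℝ (Fin d))) : Set _) := by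
  rintro _ ⟨l, -, hl, rfl⟩
  exact smul_mem_smul_set (list_sum_mem fun y hy ↦ subset_span (hl y hy))

/-- If every linearly dependent subset of the finite stencil `Λ ⊂ ℝ^d` is already
linearly dependent over the rationals, then the grid `𝔾_h` generated by `Λ` meets every
bounded set in a finite set. -/
theorem gridSet_locally_finite {d : ℕ} (Λ : Finset (EuclideanSpace ℝ (Fin d)))
    (hΛ : ∀ Λ' : Finset (EuclideanSpace ℝ (Fin d)), Λ' ⊆ Λ →
      ¬ LinearIndependent ℝ (Subtype.val : {x // x ∈ Λ'} → EuclideanSpace ℝ (Fin d)) →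
      ¬ LinearIndependent ℚ (Subtype.val : {x // x ∈ Λ'} → EuclideanSpace ℝ (Fin d)))
    (h : ℝ) (hh : 0 < h) :
    ∀ B : Set (EuclideanSpace ℝ (Fin d)), Bornology.IsBounded B →
      (gridSet Λ h ∩ B).Finite := by
  intro B hB
  obtain ⟨s, hsΛ, hspan, hsℚ⟩ := exists_linearIndependent ℚ (Λ : Set (EuclideanSpace ℝ (Fin d)))
  have hsℝ : LinearIndepOn ℝ id s := by
    have hs : s.Finite := Λ.finite_toSet.subset hsΛ
    rw [← hs.coe_toFinset] at hsℚ ⊢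
    by_contra hsℝ
    exact hΛ hs.toFinset (hs.toFinset_subset.mpr hsΛ) hsℝ hsℚ
  have hfin := finite_inter_span_int_of_subset_span_rat hsℝ Λ.finite_toSet
    (hspan ▸ subset_span) (hB.smul₀ h⁻¹)
  refine (hfin.image (h • ·)).subset ?_
  rintro _ ⟨hx, hxB⟩
  obtain ⟨y, hy, rfl⟩ := gridSet_subset_smul_span_int Λ h hx
  exact ⟨y, ⟨(mem_inv_smul_set_iff₀ hh.ne' B y).mpr hxB, hy⟩, rfl⟩
end

section
/- Let s̄ > 0 and ρ(x) = (1 + |εx|²)^{−s̄/2} on ℝ^d with ε > 0. Then for every δ > 0 there exists ε > 0 such that for all x ∈ ℝ^d, λ ∈ ℝ^d with |λ| ≤ L, and 0 < |h| < 1, the relative difference quotient satisfies |δ_{h,λ}ρ(x)/ρ(x)| ≤ δ. -/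
/-!
Since `r ↦ log (1 + r²)` is `1`-Lipschitz, `y ↦ log ρ(y) = -p log (1 + ‖ε y‖²)` is
`|p| |ε|`-Lipschitz. Hence `ρ(x + hλ) / ρ(x) = exp u` with `|u| ≤ |p| |ε| |h| ‖λ‖`, and
`|exp u - 1| ≤ 2 |u|` for `|u| ≤ 1` bounds the relative difference quotient by `2 |p| |ε| ‖λ‖`,
which is small once `ε` is.
-/

open Real

theorem abs_log_one_add_sq_sub_le (r s : ℝ) :
    |log (1 + r ^ 2) - log (1 + s ^ 2)| ≤ |r - s| := by
  have hderiv (t : ℝ) : HasDerivAt (fun t => log (1 + t ^ 2)) (2 * t / (1 + t ^ 2)) t := by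
    simpa using ((hasDerivAt_pow 2 t).const_add 1).log (by positivity)
  have hbound (t : ℝ) : ‖2 * t / (1 + t ^ 2)‖ ≤ 1 := by
    rw [norm_div, norm_eq_abs, norm_eq_abs, abs_of_pos (by positivity : (0 : ℝ) < 1 + t ^ 2),
      div_le_one (by positivity), abs_mul, abs_two]
    nlinarith [sq_abs t, sq_nonneg (|t| - 1)]
  simpa using convex_univ.norm_image_sub_le_of_norm_hasDerivWithin_le
    (fun t _ => (hderiv t).hasDerivWithinAt) (fun t _ => hbound t) (Set.mem_univ s)
    (Set.mem_univ r)

section PolyWeight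

variable {E : Type*} [SeminormedAddCommGroup E] [NormedSpace ℝ E]

/-- `polyWeight (s̄ / 2) ε` is the paper's `ρ_{s̄}(ε ·)`. -/
noncomputable def polyWeight (p ε : ℝ) (x : E) : ℝ := (1 + ‖ε • x‖ ^ 2) ^ (-p)

theorem polyWeight_pos (p ε : ℝ) (x : E) : 0 < polyWeight p ε x := by
  unfold polyWeight
  positivity

theorem abs_log_one_add_norm_smul_sq_sub_le (ε : ℝ) (x y : E) :
    |log (1 + ‖ε • y‖ ^ 2) - log (1 + ‖ε • x‖ ^ 2)| ≤ |ε| * ‖y - x‖ :=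
  calc _ ≤ |‖ε • y‖ - ‖ε • x‖| := abs_log_one_add_sq_sub_le _ _
    _ ≤ ‖ε • y - ε • x‖ := abs_norm_sub_norm_le _ _
    _ = |ε| * ‖y - x‖ := by rw [← smul_sub, norm_smul, norm_eq_abs]

theorem polyWeight_div_polyWeight (p ε : ℝ) (x y : E) :
    polyWeight p ε y / polyWeight p ε x =
      exp (-p * (log (1 + ‖ε • y‖ ^ 2) - log (1 + ‖ε • x‖ ^ 2))) := by
  rw [polyWeight, polyWeight, rpow_def_of_pos (by positivity), rpow_def_of_pos (by positivity),
    ← exp_sub]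
  ring_nf

theorem abs_polyWeight_div_sub_one_le {p ε : ℝ} {x y : E} (hsmall : |p| * |ε| * ‖y - x‖ ≤ 1) :
    |polyWeight p ε y / polyWeight p ε x - 1| ≤ 2 * (|p| * |ε| * ‖y - x‖) := by
  have hexp : |-p * (log (1 + ‖ε • y‖ ^ 2) - log (1 + ‖ε • x‖ ^ 2))| ≤ |p| * |ε| * ‖y - x‖ := by
    rw [abs_mul, abs_neg, mul_assoc]
    exact mul_le_mul_of_nonneg_left (abs_log_one_add_norm_smul_sq_sub_le ε x y) (abs_nonneg p)
  rw [polyWeight_div_polyWeight]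
  exact (abs_exp_sub_one_le (hexp.trans hsmall)).trans (by linarith)

theorem abs_polyWeight_diffQuot_div_le {p ε h : ℝ} {x v : E} (hh : h ≠ 0)
    (hsmall : |h| * (|p| * |ε| * ‖v‖) ≤ 1) :
    |((polyWeight p ε (x + h • v) - polyWeight p ε x) / h) / polyWeight p ε x|
      ≤ 2 * (|p| * |ε| * ‖v‖) := by
  have hstep : |p| * |ε| * ‖x + h • v - x‖ = |h| * (|p| * |ε| * ‖v‖) := by
    rw [add_sub_cancel_left, norm_smul, norm_eq_abs]
    ring
  have hratio := abs_polyWeight_div_sub_one_le (hstep ▸ hsmall)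
  rw [div_right_comm, sub_div, div_self (polyWeight_pos _ _ _).ne', abs_div,
    div_le_iff₀ (abs_pos.mpr hh)]
  linarith

end PolyWeight

theorem weight_relative_difference_small_general {d : ℕ} (sbar L : ℝ) :
    ∀ δ : ℝ, 0 < δ → ∃ ε : ℝ, 0 < ε ∧
      ∀ (x lam : EuclideanSpace ℝ (Fin d)) (h : ℝ), ‖lam‖ ≤ L → 0 < |h| → |h| < 1 →
        |(((1 + ‖ε • (x + h • lam)‖ ^ 2) ^ (-(sbar / 2))
            - (1 + ‖ε • x‖ ^ 2) ^ (-(sbar / 2))) / h)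
          / ((1 + ‖ε • x‖ ^ 2) ^ (-(sbar / 2)))| ≤ δ := by
  intro δ hδ
  set c := min 1 (δ / 2)
  have hc : 0 < c := by positivity
  refine ⟨c / (|sbar / 2| * |L| + 1), by positivity, fun x lam h hlam hh0 hh1 => ?_⟩
  set ε := c / (|sbar / 2| * |L| + 1)
  have hε0 : 0 < ε := by positivity
  have hεlam : |sbar / 2| * |ε| * ‖lam‖ ≤ c := by
    rw [abs_of_pos hε0, ← div_mul_cancel₀ c (by positivity : |sbar / 2| * |L| + 1 ≠ 0)]
    calc |sbar / 2| * ε * ‖lam‖ ≤ |sbar / 2| * ε * |L| := by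
          gcongr
          exact hlam.trans (le_abs_self L)
      _ ≤ ε * (|sbar / 2| * |L| + 1) := by linarith
  have hsmall : |h| * (|sbar / 2| * |ε| * ‖lam‖) ≤ 1 := by
    nlinarith [abs_nonneg h, min_le_left 1 (δ / 2)]
  exact (abs_polyWeight_diffQuot_div_le (abs_pos.mp hh0) hsmall).trans
    (by linarith [min_le_right 1 (δ / 2)])

/-- For the weight `ρ(x) = (1 + |εx|²)^{−s̄/2}` with `s̄ > 0`: for every `δ > 0` there is
`ε > 0` such that for all `x`, all `λ` with `|λ| ≤ L` and all `0 < |h| < 1`,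
`|δ_{h,λ}ρ(x)/ρ(x)| ≤ δ`, where `δ_{h,λ}ρ(x) = (1/h)(ρ(x+hλ) − ρ(x))`. -/
theorem weight_relative_difference_small {d : ℕ} (sbar L : ℝ) (hs : 0 < sbar)
    (hL : 0 ≤ L) :
    ∀ δ : ℝ, 0 < δ → ∃ ε : ℝ, 0 < ε ∧
      ∀ (x lam : EuclideanSpace ℝ (Fin d)) (h : ℝ), ‖lam‖ ≤ L → 0 < |h| → |h| < 1 →
        |(((1 + ‖ε • (x + h • lam)‖ ^ 2) ^ (-(sbar / 2))
            - (1 + ‖ε • x‖ ^ 2) ^ (-(sbar / 2))) / h)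
          / ((1 + ‖ε • x‖ ^ 2) ^ (-(sbar / 2)))| ≤ δ :=
  weight_relative_difference_small_general sbar L
end
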